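/- Let y_1, …, y_n be nonzero vectors in ℝ^q that span ℝ^q and let c > 0. Let Γ be a symmetric positive definite q×q matrix, let α > 0, and set Γ′ = α · Γ^(1/2) N(Γ) Γ^(1/2). Let λ₁ and λ_q denote the largest and smallest eigenvalues of N(Γ), and λ₁′ and λ_q′ those of N(Γ′). If λ₁ > 1/α and λ_q < 1/α, then λ₁′ ≤ λ₁ and λ_q′ ≥ λ_q. -/

import Mathlib

open Matrix Classical

/-- Principal (symmetric positive semidefinite) square root of a matrix;
junk value `0` if the matrix is not positive semidefinite. -/
noncomputable def matSqrt {q : ℕ} (A : Matrix (Fin q) (Fin q) ℝ) : Matrix (Fin q) (Fin q) ℝ :=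
  if h : A.PosSemidef then h.1.eigenvectorUnitary.1 * diagonal ((√·) ∘ h.1.eigenvalues) *
    (star h.1.eigenvectorUnitary : Matrix (Fin q) (Fin q) ℝ) else 0

/-- Loewner order: `loewnerLE A B` iff `B - A` is positive semidefinite. -/
def loewnerLE {q : ℕ} (A B : Matrix (Fin q) (Fin q) ℝ) : Prop := (B - A).PosSemidef

/-- Largest eigenvalue of a (Hermitian) matrix; junk value `0` otherwise. -/
noncomputable def maxEig {q : ℕ} (A : Matrix (Fin q) (Fin q) ℝ) : ℝ :=
  if h : A.IsHermitian then ⨆ i, h.eigenvalues i else 0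

/-- Smallest eigenvalue of a (Hermitian) matrix; junk value `0` otherwise. -/
noncomputable def minEig {q : ℕ} (A : Matrix (Fin q) (Fin q) ℝ) : ℝ :=
  if h : A.IsHermitian then ⨅ i, h.eigenvalues i else 0

/-- The map `N(Γ) = c ∑ᵢ (Γ^(-1/2) yᵢ yᵢᵀ Γ^(-1/2)) / (yᵢᵀ Γ⁻¹ yᵢ) + Γ⁻¹`. -/
noncomputable def Nmat {q n : ℕ} (y : Fin n → (Fin q → ℝ)) (c : ℝ)
    (Γ : Matrix (Fin q) (Fin q) ℝ) : Matrix (Fin q) (Fin q) ℝ :=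
  c • ∑ i, (y i ⬝ᵥ Γ⁻¹ *ᵥ y i)⁻¹ •
      ((matSqrt Γ)⁻¹ * vecMulVec (y i) (y i) * (matSqrt Γ)⁻¹)
    + Γ⁻¹

/-!
Write `S = Γ^(1/2)` and `T(Γ) = c ∑ᵢ yᵢ yᵢᵀ / (yᵢᵀ Γ⁻¹ yᵢ)`, so that `S N(Γ) S = T(Γ) + 1` and
`Γ' = α (T(Γ) + 1)`. Conjugating by `S` turns the spectral bound `N(Γ) ≤ λ₁` into
`T(Γ) + 1 ≤ λ₁ Γ`, i.e. `Γ' ≤ α λ₁ Γ`. The map `Γ ↦ T(Γ)` is monotone in the Loewner order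
(matrix inversion is antitone) and homogeneous of degree one, so `T(Γ') ≤ α λ₁ T(Γ)`; since
`α λ₁ ≥ 1` this gives `T(Γ') + 1 ≤ λ₁ Γ'`, i.e. `N(Γ') ≤ λ₁`. The bound for `λ_q` is the mirror
image, using `0 < α λ_q ≤ 1`.
-/

open scoped MatrixOrder ComplexOrder

theorem IsSelfAdjoint.conjugate_le_conjugate_iff {R : Type*} [Ring R] [PartialOrder R]
    [StarRing R] [StarOrderedRing R] {a b c : R} (hc : IsSelfAdjoint c) (hu : IsUnit c) :
    c * a * c ≤ c * b * c ↔ a ≤ b := by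
  rw [← sub_nonneg, ← sub_nonneg (a := b), ← sub_mul, ← mul_sub]
  nth_rewrite 1 [← hc.star_eq]
  exact hu.star_left_conjugate_nonneg_iff

theorem Matrix.PosDef.inv_le_inv_of_le {𝕜 ι : Type*} [RCLike 𝕜] [Fintype ι] [DecidableEq ι]
    {A B : Matrix ι ι 𝕜} (hA : A.PosDef) (hAB : A ≤ B) : B⁻¹ ≤ A⁻¹ := by
  -- The two Schur complements of `[B 1; 1 A⁻¹]` are `B - A` and `A⁻¹ - B⁻¹`.
  have hB : B.PosDef := by simpa using hA.add_posSemidef (le_iff.mp hAB)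
  let := hB.isUnit.invertible
  let := hA.inv.isUnit.invertible
  have hAinv : A⁻¹⁻¹ = A := nonsing_inv_nonsing_inv A (A.isUnit_iff_isUnit_det.mp hA.isUnit)
  have hM : (fromBlocks B 1 1 A⁻¹).PosSemidef := by
    have := (PosDef.fromBlocks₂₂ B 1 hA.inv).mpr (by simpa [hAinv] using le_iff.mp hAB)
    simpa using this
  simpa [le_iff] using (PosDef.fromBlocks₁₁ 1 A⁻¹ hB).mp (by simpa using hM)

theorem Matrix.dotProduct_mulVec_le_of_le {ι : Type*} [Fintype ι] {A B : Matrix ι ι ℝ}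
    (hAB : A ≤ B) (x : ι → ℝ) : x ⬝ᵥ A *ᵥ x ≤ x ⬝ᵥ B *ᵥ x := by
  have := (le_iff.mp hAB).dotProduct_mulVec_nonneg x
  rwa [star_trivial, sub_mulVec, dotProduct_sub, sub_nonneg] at this

section matSqrt

variable {q : ℕ} {A : Matrix (Fin q) (Fin q) ℝ}

theorem matSqrt_eq_sqrt (hA : A.PosSemidef) : matSqrt A = CFC.sqrt A := by
  rw [CFC.sqrt_eq_real_sqrt A hA.nonneg, cfcₙ_eq_cfc, hA.1.cfc_eq, matSqrt, dif_pos hA]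
  rfl

theorem Matrix.PosSemidef.matSqrt_mul_self (hA : A.PosSemidef) : matSqrt A * matSqrt A = A := by
  rw [matSqrt_eq_sqrt hA]
  exact CFC.sqrt_mul_sqrt_self A hA.nonneg

theorem Matrix.PosSemidef.isSelfAdjoint_matSqrt (hA : A.PosSemidef) : IsSelfAdjoint (matSqrt A) :=
  matSqrt_eq_sqrt hA ▸ IsSelfAdjoint.of_nonneg (CFC.sqrt_nonneg A)

theorem Matrix.PosDef.isUnit_matSqrt (hA : A.PosDef) : IsUnit (matSqrt A) := by
  rw [matSqrt_eq_sqrt hA.posSemidef, CFC.isUnit_sqrt_iff A hA.posSemidef.nonneg]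
  exact hA.isUnit

end matSqrt

section Eigenvalues

variable {q : ℕ} {A : Matrix (Fin q) (Fin q) ℝ}

theorem maxEig_le_iff [Nonempty (Fin q)] (hA : A.IsHermitian) {r : ℝ} :
    maxEig A ≤ r ↔ A ≤ r • 1 := by
  rw [maxEig, dif_pos hA, ciSup_le_iff (Set.finite_range _).bddAbove,
    ← Algebra.algebraMap_eq_smul_one, le_algebraMap_iff_spectrum_le hA.isSelfAdjoint,
    hA.spectrum_real_eq_range_eigenvalues, Set.forall_mem_range]

theorem le_minEig_iff [Nonempty (Fin q)] (hA : A.IsHermitian) {r : ℝ} :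
    r ≤ minEig A ↔ r • 1 ≤ A := by
  rw [minEig, dif_pos hA, le_ciInf_iff (Set.finite_range _).bddBelow,
    ← Algebra.algebraMap_eq_smul_one, algebraMap_le_iff_le_spectrum hA.isSelfAdjoint,
    hA.spectrum_real_eq_range_eigenvalues, Set.forall_mem_range]

theorem minEig_pos [Nonempty (Fin q)] (hA : A.PosDef) : 0 < minEig A := by
  obtain ⟨i, hi⟩ := exists_eq_ciInf_of_finite (f := hA.1.eigenvalues)
  rw [minEig, dif_pos hA.1, ← hi]
  exact hA.eigenvalues_pos i

end Eigenvalues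

noncomputable def weightedOuterSum {q n : ℕ} (y : Fin n → (Fin q → ℝ)) (c : ℝ)
    (Γ : Matrix (Fin q) (Fin q) ℝ) : Matrix (Fin q) (Fin q) ℝ :=
  c • ∑ i, (y i ⬝ᵥ Γ⁻¹ *ᵥ y i)⁻¹ • vecMulVec (y i) (y i)

section Nmat

variable {q n : ℕ} {y : Fin n → (Fin q → ℝ)} {c : ℝ} {Γ : Matrix (Fin q) (Fin q) ℝ}

theorem matSqrt_mul_Nmat_mul_matSqrt (hΓ : Γ.PosDef) :
    matSqrt Γ * Nmat y c Γ * matSqrt Γ = weightedOuterSum y c Γ + 1 := by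
  have hS := hΓ.posSemidef.matSqrt_mul_self
  set S := matSqrt Γ with hSdef
  have hSu : IsUnit S.det := S.isUnit_iff_isUnit_det.mp hΓ.isUnit_matSqrt
  have hΓinv : Γ⁻¹ = S⁻¹ * S⁻¹ := by rw [← hS, Matrix.mul_inv_rev]
  have hN : Nmat y c Γ = S⁻¹ * (weightedOuterSum y c Γ + 1) * S⁻¹ := by
    rw [Nmat, weightedOuterSum, hΓinv, ← hSdef]
    simp only [Matrix.mul_add, Matrix.add_mul, Matrix.mul_smul,
      Matrix.smul_mul, Matrix.mul_sum, Matrix.sum_mul, Matrix.mul_one]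
  rw [hN, ← Matrix.mul_assoc, ← Matrix.mul_assoc, mul_nonsing_inv S hSu, Matrix.one_mul,
    Matrix.mul_assoc, nonsing_inv_mul S hSu, Matrix.mul_one]

theorem Nmat_le_smul_one_iff (hΓ : Γ.PosDef) {r : ℝ} :
    Nmat y c Γ ≤ r • 1 ↔ weightedOuterSum y c Γ + 1 ≤ r • Γ := by
  rw [← hΓ.posSemidef.isSelfAdjoint_matSqrt.conjugate_le_conjugate_iff hΓ.isUnit_matSqrt,
    matSqrt_mul_Nmat_mul_matSqrt hΓ, Matrix.mul_smul, Matrix.mul_one, Matrix.smul_mul,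
    hΓ.posSemidef.matSqrt_mul_self]

theorem smul_one_le_Nmat_iff (hΓ : Γ.PosDef) {r : ℝ} :
    r • 1 ≤ Nmat y c Γ ↔ r • Γ ≤ weightedOuterSum y c Γ + 1 := by
  rw [← hΓ.posSemidef.isSelfAdjoint_matSqrt.conjugate_le_conjugate_iff hΓ.isUnit_matSqrt,
    matSqrt_mul_Nmat_mul_matSqrt hΓ, Matrix.mul_smul, Matrix.mul_one, Matrix.smul_mul,
    hΓ.posSemidef.matSqrt_mul_self]

theorem weightedOuterSum_nonneg (hc : 0 ≤ c) (hΓ : Γ.PosSemidef) :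
    0 ≤ weightedOuterSum y c Γ := by
  refine smul_nonneg hc (Finset.sum_nonneg fun i _ => smul_nonneg ?_ ?_)
  · have := hΓ.inv.dotProduct_mulVec_nonneg (y i)
    rw [star_trivial] at this
    exact inv_nonneg.mpr this
  · simpa using (posSemidef_vecMulVec_self_star (y i)).nonneg

theorem weightedOuterSum_add_one_posDef (hc : 0 ≤ c) (hΓ : Γ.PosSemidef) :
    (weightedOuterSum y c Γ + 1).PosDef :=
  PosDef.posSemidef_add (weightedOuterSum_nonneg hc hΓ).posSemidef PosDef.one

theorem weightedOuterSum_smul (hΓ : IsUnit Γ.det) {μ : ℝ} (hμ : μ ≠ 0) :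
    weightedOuterSum y c (μ • Γ) = μ • weightedOuterSum y c Γ := by
  have hinv : (μ • Γ)⁻¹ = μ⁻¹ • Γ⁻¹ :=
    inv_eq_left_inv (by simp [hμ, smul_smul, nonsing_inv_mul Γ hΓ])
  simp only [weightedOuterSum, hinv, smul_mulVec, dotProduct_smul, smul_eq_mul, mul_inv, inv_inv,
    Finset.smul_sum, smul_smul, mul_left_comm c μ]

theorem weightedOuterSum_mono (hy : ∀ i, y i ≠ 0) (hc : 0 ≤ c)
    {Γ₁ Γ₂ : Matrix (Fin q) (Fin q) ℝ} (hΓ₁ : Γ₁.PosDef) (h : Γ₁ ≤ Γ₂) :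
    weightedOuterSum y c Γ₁ ≤ weightedOuterSum y c Γ₂ := by
  have hΓ₂ : Γ₂.PosDef := by simpa using hΓ₁.add_posSemidef (le_iff.mp h)
  refine smul_le_smul_of_nonneg_left (Finset.sum_le_sum fun i _ => ?_) hc
  refine smul_le_smul_of_nonneg_right ?_ ?_
  · have h₂ := hΓ₂.inv.dotProduct_mulVec_pos (hy i)
    rw [star_trivial] at h₂
    exact inv_anti₀ h₂ (dotProduct_mulVec_le_of_le (hΓ₁.inv_le_inv_of_le h) (y i))
  · simpa using (posSemidef_vecMulVec_self_star (y i)).nonneg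

variable (y) in
theorem Nmat_posDef (hc : 0 ≤ c) (hΓ : Γ.PosDef) : (Nmat y c Γ).PosDef := by
  rw [← IsUnit.posDef_star_left_conjugate_iff hΓ.isUnit_matSqrt,
    hΓ.posSemidef.isSelfAdjoint_matSqrt.star_eq, matSqrt_mul_Nmat_mul_matSqrt hΓ]
  exact weightedOuterSum_add_one_posDef hc hΓ.posSemidef

variable {α : ℝ}

variable (y) in
theorem posDef_smul_matSqrt_mul_Nmat_mul_matSqrt (hc : 0 ≤ c) (hΓ : Γ.PosDef) (hα : 0 < α) :
    (α • (matSqrt Γ * Nmat y c Γ * matSqrt Γ)).PosDef := by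
  rw [matSqrt_mul_Nmat_mul_matSqrt hΓ]
  exact (weightedOuterSum_add_one_posDef (y := y) hc hΓ.posSemidef).smul hα

theorem Nmat_smul_matSqrt_mul_Nmat_mul_matSqrt_le (hy : ∀ i, y i ≠ 0) (hc : 0 ≤ c)
    (hΓ : Γ.PosDef) (hα : 0 < α) {L : ℝ} (hL : 1 ≤ α * L) (h : Nmat y c Γ ≤ L • 1) :
    Nmat y c (α • (matSqrt Γ * Nmat y c Γ * matSqrt Γ)) ≤ L • 1 := by
  have hΓ' := posDef_smul_matSqrt_mul_Nmat_mul_matSqrt y hc hΓ hα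
  rw [matSqrt_mul_Nmat_mul_matSqrt hΓ] at hΓ' ⊢
  set T := weightedOuterSum y c Γ
  have hΓ'le : α • (T + 1) ≤ (α * L) • Γ := by
    rw [mul_smul]
    exact smul_le_smul_of_nonneg_left ((Nmat_le_smul_one_iff hΓ).mp h) hα.le
  rw [Nmat_le_smul_one_iff hΓ']
  calc weightedOuterSum y c (α • (T + 1)) + 1
      ≤ weightedOuterSum y c ((α * L) • Γ) + 1 :=
        add_le_add_left (weightedOuterSum_mono hy hc hΓ' hΓ'le) 1
    _ = (α * L) • T + 1 := by
        rw [weightedOuterSum_smul (Γ.isUnit_iff_isUnit_det.mp hΓ.isUnit) (by positivity)]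
    _ ≤ (α * L) • T + (α * L) • 1 := add_le_add_right (le_smul_of_one_le_left zero_le_one hL) _
    _ = L • (α • (T + 1)) := by rw [smul_smul, mul_comm L α, smul_add]

theorem smul_one_le_Nmat_smul_matSqrt_mul_Nmat_mul_matSqrt (hy : ∀ i, y i ≠ 0) (hc : 0 ≤ c)
    (hΓ : Γ.PosDef) (hα : 0 < α) {l : ℝ} (hl : 0 < l) (hαl : α * l ≤ 1)
    (h : l • 1 ≤ Nmat y c Γ) :
    l • 1 ≤ Nmat y c (α • (matSqrt Γ * Nmat y c Γ * matSqrt Γ)) := by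
  have hΓ' := posDef_smul_matSqrt_mul_Nmat_mul_matSqrt y hc hΓ hα
  rw [matSqrt_mul_Nmat_mul_matSqrt hΓ] at hΓ' ⊢
  set T := weightedOuterSum y c Γ
  have hleΓ' : (α * l) • Γ ≤ α • (T + 1) := by
    rw [mul_smul]
    exact smul_le_smul_of_nonneg_left ((smul_one_le_Nmat_iff hΓ).mp h) hα.le
  rw [smul_one_le_Nmat_iff hΓ']
  calc l • (α • (T + 1)) = (α * l) • T + (α * l) • 1 := by
        rw [smul_smul, mul_comm l α, smul_add]
    _ ≤ (α * l) • T + 1 := add_le_add_right (smul_le_of_le_one_left zero_le_one hαl) _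
    _ = weightedOuterSum y c ((α * l) • Γ) + 1 := by
        rw [weightedOuterSum_smul (Γ.isUnit_iff_isUnit_det.mp hΓ.isUnit) (by positivity)]
    _ ≤ weightedOuterSum y c (α • (T + 1)) + 1 :=
        add_le_add_left (weightedOuterSum_mono hy hc (hΓ.smul (by positivity)) hleΓ') 1

end Nmat

theorem Nmat_extreme_eigenvalues_monotone_general {q n : ℕ}
    (y : Fin n → (Fin q → ℝ)) (hy : ∀ i, y i ≠ 0)
    {c : ℝ} (hc : 0 < c)
    {Γ : Matrix (Fin q) (Fin q) ℝ} (hΓ : Γ.PosDef)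
    {α : ℝ} (hα : 0 < α)
    {Γ' : Matrix (Fin q) (Fin q) ℝ}
    (hΓ' : Γ' = α • (matSqrt Γ * Nmat y c Γ * matSqrt Γ))
    (hlam1 : 1 / α < maxEig (Nmat y c Γ))
    (hlamq : minEig (Nmat y c Γ) < 1 / α) :
    maxEig (Nmat y c Γ') ≤ maxEig (Nmat y c Γ) ∧
      minEig (Nmat y c Γ) ≤ minEig (Nmat y c Γ') := by
  rcases isEmpty_or_nonempty (Fin q) with hq | hq
  · exact ⟨(congrArg maxEig (Subsingleton.elim _ _)).le,
      (congrArg minEig (Subsingleton.elim _ _)).le⟩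
  subst hΓ'
  have hN := Nmat_posDef y hc.le hΓ
  have hN' := Nmat_posDef y hc.le (posDef_smul_matSqrt_mul_Nmat_mul_matSqrt y hc.le hΓ hα)
  constructor
  · rw [maxEig_le_iff hN'.isHermitian]
    refine Nmat_smul_matSqrt_mul_Nmat_mul_matSqrt_le hy hc.le hΓ hα ?_
      ((maxEig_le_iff hN.isHermitian).mp le_rfl)
    exact ((div_lt_iff₀' hα).mp hlam1).le
  · rw [le_minEig_iff hN'.isHermitian]
    refine smul_one_le_Nmat_smul_matSqrt_mul_Nmat_mul_matSqrt hy hc.le hΓ hα (minEig_pos hN) ?_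
      ((le_minEig_iff hN.isHermitian).mp le_rfl)
    exact ((lt_div_iff₀' hα).mp hlamq).le

/-- If the nonzero `yᵢ` span `ℝ^q`, `c > 0`, `Γ ≻ 0`, `α > 0` and
`Γ' = α · Γ^(1/2) N(Γ) Γ^(1/2)`, and if the largest eigenvalue `λ₁` of `N(Γ)` satisfies
`λ₁ > 1/α` while the smallest eigenvalue `λ_q` satisfies `λ_q < 1/α`, then
`λ₁' ≤ λ₁` and `λ_q' ≥ λ_q`, where `λ₁'`, `λ_q'` are the extreme eigenvalues of `N(Γ')`. -/
theorem Nmat_extreme_eigenvalues_monotone {q n : ℕ}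
    (y : Fin n → (Fin q → ℝ)) (hy : ∀ i, y i ≠ 0)
    (hspan : Submodule.span ℝ (Set.range y) = ⊤)
    {c : ℝ} (hc : 0 < c)
    {Γ : Matrix (Fin q) (Fin q) ℝ} (hΓ : Γ.PosDef)
    {α : ℝ} (hα : 0 < α)
    {Γ' : Matrix (Fin q) (Fin q) ℝ}
    (hΓ' : Γ' = α • (matSqrt Γ * Nmat y c Γ * matSqrt Γ))
    (hlam1 : 1 / α < maxEig (Nmat y c Γ))
    (hlamq : minEig (Nmat y c Γ) < 1 / α) :
    maxEig (Nmat y c Γ') ≤ maxEig (Nmat y c Γ) ∧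
      minEig (Nmat y c Γ) ≤ minEig (Nmat y c Γ') :=
  Nmat_extreme_eigenvalues_monotone_general y hy hc hΓ hα hΓ' hlam1 hlamq
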